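/- arXiv:1005.4007 — 7 statements merged into one kernel-verified Lean document; each statement's English description precedes it below -/
import Mathlib

section
/- For all n ≥ 1, the generalized Dumont-Foata polynomials satisfy the symmetry Γ_n(x,y,z,x̄,ȳ,z̄) = Γ_n(x̄,z̄,ȳ,x,z,y). -/
/-- Auxiliary: `GammaAux n = Γ_{n+1}` for the generalized Dumont-Foata polynomials. -/
def GammaAux {R : Type*} [CommRing R] : ℕ → R → R → R → R → R → R → R
  | 0, _, _, _, _, _, _ => 1
  | n + 1, x, y, z, xb, yb, zb =>
      (x + zb) * (y + xb) * GammaAux n (x + 1) y z (xb + 1) yb zb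
        + (x * (yb - y) + xb * (z - zb) - x * xb) * GammaAux n x y z xb yb zb

/-- The generalized Dumont-Foata polynomial `Γ_n` (defined for `n ≥ 1`, with `Γ_1 = 1`). -/
def Gamma {R : Type*} [CommRing R] (n : ℕ) : R → R → R → R → R → R → R :=
  GammaAux (n - 1)

lemma gammaAux_symm {R : Type*} [CommRing R] (n : ℕ) :
    ∀ x y z xb yb zb : R,
    GammaAux n x y z xb yb zb = GammaAux n xb zb yb x z y := by
  induction n with
  | zero => intro _ _ _ _ _ _; rfl
  | succ n ih =>
    intro x y z xb yb zb
    simp only [GammaAux, ih]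
    ring

theorem gamma_symmetry {R : Type*} [CommRing R] (n : ℕ) (hn : 1 ≤ n)
    (x y z xb yb zb : R) :
    Gamma n x y z xb yb zb = Gamma n xb zb yb x z y := by
  exact gammaAux_symm _ x y z xb yb zb
end

section
/- Let D and E be the ℕ×ℕ matrices with entries D(i,i) = y+i, D(i,i+1) = i+1, E(i,i) = x̄+i, E(i+1,i) = y+x̄+i, and all other entries zero (where x̄ and y are elements of a commutative ring). Then DE − ED = D + E, in the sense that for all indices i,j the corresponding entries agree (all sums involved are finite since the matrices are banded). -/
/-! Every row of `D` and of `E` has at most two nonzero entries, so each entry of `DE` and `ED` is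
a sum of at most two products; the identity then reduces to a ring identity in each of the
finitely many positions of `j` relative to `i`. -/

/-- Entrywise product of ℕ×ℕ matrices; the (finite, for banded matrices) sums are
expressed with `finsum`. -/
noncomputable def matMul {R : Type*} [CommRing R] (M N : ℕ → ℕ → R) : ℕ → ℕ → R :=
  fun i j => ∑ᶠ k, M i k * N k j

/-- Powers of a ℕ×ℕ matrix, with `matPow M 0` the identity matrix. -/
noncomputable def matPow {R : Type*} [CommRing R] (M : ℕ → ℕ → R) : ℕ → ℕ → ℕ → R
  | 0 => fun i j => if i = j then 1 else 0
  | n + 1 => matMul M (matPow M n)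

/-- The matrix `D`: `D i i = y + i`, `D i (i+1) = i + 1`, other entries zero. -/
def matD {R : Type*} [CommRing R] (y : R) : ℕ → ℕ → R := fun i j =>
  if j = i then y + (i : R) else if j = i + 1 then (i : R) + 1 else 0

/-- The matrix `E`: `E i i = x̄ + i`, `E (i+1) i = y + x̄ + i`, other entries zero. -/
def matE {R : Type*} [CommRing R] (y xb : R) : ℕ → ℕ → R := fun i j =>
  if j = i then xb + (i : R) else if i = j + 1 then y + xb + (j : R) else 0

section

variable {R : Type*} [CommRing R]

theorem matMul_apply_eq_sum_of_row_support {M : ℕ → ℕ → R} (N : ℕ → ℕ → R) {i : ℕ}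
    {s : Finset ℕ} (hs : ∀ k ∉ s, M i k = 0) (j : ℕ) :
    matMul M N i j = ∑ k ∈ s, M i k * N k j :=
  finsum_eq_finsetSum_of_support_subset _ fun k hk => by
    by_contra h
    exact hk (by simp [hs k h])

theorem matMul_matD_apply (y : R) (N : ℕ → ℕ → R) (i j : ℕ) :
    matMul (matD y) N i j = (y + i) * N i j + (i + 1) * N (i + 1) j := by
  rw [matMul_apply_eq_sum_of_row_support N (s := {i, i + 1}) (fun k hk => ?_),
    Finset.sum_pair (by omega)]
  · simp [matD]
  · simp only [Finset.mem_insert, Finset.mem_singleton, not_or] at hk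
    simp [matD, hk.1, hk.2]

theorem matMul_matE_apply_zero (y xb : R) (N : ℕ → ℕ → R) (j : ℕ) :
    matMul (matE y xb) N 0 j = xb * N 0 j := by
  rw [matMul_apply_eq_sum_of_row_support N (s := {0}) (fun k hk => ?_), Finset.sum_singleton]
  · simp [matE]
  · simp only [Finset.mem_singleton] at hk
    simp [matE, hk]

theorem matMul_matE_apply_succ (y xb : R) (N : ℕ → ℕ → R) (i j : ℕ) :
    matMul (matE y xb) N (i + 1) j = (y + xb + i) * N i j + (xb + i + 1) * N (i + 1) j := by
  rw [matMul_apply_eq_sum_of_row_support N (s := {i, i + 1}) (fun k hk => ?_),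
    Finset.sum_pair (by omega)]
  · simp [matE, add_assoc]
  · simp only [Finset.mem_insert, Finset.mem_singleton, not_or] at hk
    simp [matE, hk.2, show i ≠ k by omega]

end

theorem de_commutation {R : Type*} [CommRing R] (y xb : R) (i j : ℕ) :
    matMul (matD y) (matE y xb) i j - matMul (matE y xb) (matD y) i j =
      matD y i j + matE y xb i j := by
  rcases i with _ | i
  · rw [matMul_matD_apply, matMul_matE_apply_zero]
    rcases j with _ | _ | j <;> simp [matD, matE]; ring
  · rw [matMul_matD_apply, matMul_matE_apply_succ]
    simp only [matD, matE]
    split_ifs <;> subst_vars <;> first | omega | (push_cast; ring)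
end

section
/- Let B and A be the ℕ×ℕ matrices with B(i,i) = i, B(i,i+1) = i+1, A(i+1,i) = 1 (other entries zero), and define N = A(B+xI)(B+x̄I) + y·z̄·(A+I) + (zI + z̄A)(B+x̄I) + (ȳI + yA)(B+xI). Then N is tridiagonal with N(i,i) = (x+i)(ȳ+i)+(y+i)(z̄+i)+(z+i)(x̄+i) − i(i+1), N(i,i+1) = (i+1)(z+ȳ+i), and N(i+1,i) = (x+z̄+i)(y+x̄+i). -/
/-- The matrix `B`: `B i i = i`, `B i (i+1) = i + 1`, other entries zero. -/
def matB {R : Type*} [CommRing R] : ℕ → ℕ → R := fun i j =>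
  if j = i then (i : R) else if j = i + 1 then (i : R) + 1 else 0

/-- The matrix `A`: `A (i+1) i = 1`, other entries zero. -/
def matA {R : Type*} [CommRing R] : ℕ → ℕ → R := fun i j =>
  if i = j + 1 then 1 else 0

/-- The identity ℕ×ℕ matrix. -/
def matI {R : Type*} [CommRing R] : ℕ → ℕ → R := fun i j => if i = j then 1 else 0

/-- The matrix `N = A(B+xI)(B+x̄I) + yz̄(A+I) + (zI+z̄A)(B+x̄I) + (ȳI+yA)(B+xI)`. -/
noncomputable def matN {R : Type*} [CommRing R] (x y z xb yb zb : R) : ℕ → ℕ → R :=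
  fun i j =>
    matMul matA (matMul (fun a b => matB a b + x * matI a b)
        (fun a b => matB a b + xb * matI a b)) i j
      + y * zb * (matA i j + matI i j)
      + matMul (fun a b => z * matI a b + zb * matA a b)
          (fun a b => matB a b + xb * matI a b) i j
      + matMul (fun a b => yb * matI a b + y * matA a b)
          (fun a b => matB a b + x * matI a b) i j


private lemma finsum_two {R : Type*} [CommRing R] (f : ℕ → R) (i : ℕ)
    (h : ∀ k, k ≠ i → k ≠ i + 1 → f k = 0) : ∑ᶠ k, f k = f i + f (i + 1) := by
  rw [finsum_eq_finset_sum_of_support_subset f (s := {i, i + 1})]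
  · exact Finset.sum_pair (by omega)
  · intro k hk
    simp only [Finset.coe_insert, Finset.coe_singleton, Set.mem_insert_iff,
      Set.mem_singleton_iff]
    by_contra hc
    push_neg at hc
    exact hk (h k hc.1 hc.2)

private lemma mulP {R : Type*} [CommRing R] (c : R) (M : ℕ → ℕ → R) (i j : ℕ) :
    matMul (fun a b => matB a b + c * matI a b) M i j
      = ((i : R) + c) * M i j + ((i : R) + 1) * M (i + 1) j := by
  show (∑ᶠ k, (matB i k + c * matI i k) * M k j) = _
  rw [finsum_two _ i]
  · simp [matB, matI]; try ring
  · intro k h1 h2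
    simp [matB, matI, h1, h2, Ne.symm h1]

private lemma mulA_succ {R : Type*} [CommRing R] (M : ℕ → ℕ → R) (i j : ℕ) :
    matMul matA M (i + 1) j = M i j := by
  show (∑ᶠ k, matA (i + 1) k * M k j) = _
  rw [finsum_eq_single _ i]
  · simp [matA]
  · intro k hk
    simp [matA, Ne.symm hk]

private lemma mulA_zero {R : Type*} [CommRing R] (M : ℕ → ℕ → R) (j : ℕ) :
    matMul matA M 0 j = 0 := by
  show (∑ᶠ k, matA 0 k * M k j) = _
  rw [finsum_eq_single _ 0] <;> simp [matA]

private lemma mulIA_succ {R : Type*} [CommRing R] (α β : R) (M : ℕ → ℕ → R) (i j : ℕ) :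
    matMul (fun a b => α * matI a b + β * matA a b) M (i + 1) j
      = β * M i j + α * M (i + 1) j := by
  show (∑ᶠ k, (α * matI (i + 1) k + β * matA (i + 1) k) * M k j) = _
  rw [finsum_two _ i]
  · simp [matA, matI]
  · intro k h1 h2
    simp [matA, matI, Ne.symm h1, Ne.symm h2]

private lemma mulIA_zero {R : Type*} [CommRing R] (α β : R) (M : ℕ → ℕ → R) (j : ℕ) :
    matMul (fun a b => α * matI a b + β * matA a b) M 0 j = α * M 0 j := by
  show (∑ᶠ k, (α * matI 0 k + β * matA 0 k) * M k j) = _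
  rw [finsum_eq_single _ 0]
  · simp [matA, matI]
  · intro k hk
    simp [matA, matI, Ne.symm hk]

set_option maxHeartbeats 2000000 in
theorem matN_entries {R : Type*} [CommRing R] (x y z xb yb zb : R) :
    (∀ i j : ℕ, (i + 1 < j ∨ j + 1 < i) → matN x y z xb yb zb i j = 0) ∧
    (∀ i : ℕ, matN x y z xb yb zb i i =
      (x + (i : R)) * (yb + i) + (y + i) * (zb + i) + (z + i) * (xb + i)
        - i * (i + 1)) ∧
    (∀ i : ℕ, matN x y z xb yb zb i (i + 1) = ((i : R) + 1) * (z + yb + (i : R))) ∧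
    (∀ i : ℕ, matN x y z xb yb zb (i + 1) i = (x + zb + (i : R)) * (y + xb + (i : R))) := by
  refine ⟨?_, ?_, ?_, ?_⟩
  · intro i j hij
    rcases i with _ | s <;>
      simp only [matN, mulA_zero, mulA_succ, mulIA_zero, mulIA_succ, mulP] <;>
      simp only [matA, matB, matI] <;>
      split_ifs <;> first | omega | (push_cast; ring1) | simp_all | exact ‹False›.elim
  · intro i
    rcases i with _ | s <;>
      simp only [matN, mulA_zero, mulA_succ, mulIA_zero, mulIA_succ, mulP] <;>
      simp only [matA, matB, matI] <;>
      split_ifs <;> first | omega | (push_cast; ring1) | simp_all | exact ‹False›.elim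
  · intro i
    rcases i with _ | s <;>
      simp only [matN, mulA_zero, mulA_succ, mulIA_zero, mulIA_succ, mulP] <;>
      simp only [matA, matB, matI] <;>
      split_ifs <;> first | omega | (push_cast; ring1) | simp_all | exact ‹False›.elim
  · intro i
    simp only [matN, mulA_succ, mulIA_succ, mulP]
    simp only [matA, matB, matI]
    split_ifs <;> first | omega | (push_cast; ring1) | simp_all | exact ‹False›.elim
end

section
/- For each n ≥ 1, the Dumont-Foata polynomial F_n(x,y,z) is a symmetric function of x, y, z, i.e., F_n(x,y,z) = F_n(σ(x),σ(y),σ(z)) for every permutation σ of the three variables. -/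
/-- Auxiliary: `FAux n = F_{n+1}` for the Dumont-Foata polynomials. -/
def FAux {R : Type*} [CommRing R] : ℕ → R → R → R → R
  | 0, _, _, _ => 1
  | n + 1, x, y, z =>
      (x + y) * (x + z) * FAux n (x + 1) y z - x ^ 2 * FAux n x y z

/-- The Dumont-Foata polynomial `F_n` (defined for `n ≥ 1`, with `F_1 = 1`). -/
def DumontFoataF {R : Type*} [CommRing R] (n : ℕ) : R → R → R → R :=
  FAux (n - 1)

lemma FAux_swap23 {R : Type*} [CommRing R] (n : ℕ) (x y z : R) :
    FAux n x y z = FAux n x z y := by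
  induction n generalizing x with
  | zero => rfl
  | succ n ih => simp only [FAux]; rw [ih (x+1), ih x]; ring

lemma FAux_key {R : Type*} [CommRing R] (n : ℕ) :
    (∀ x y z : R, FAux n x y z = FAux n y x z) ∧
    (∀ x y z : R, (x+z) * FAux n (x+1) y z - (y+z) * FAux n (y+1) x z
        + (y-x) * FAux n x y z = 0) := by
  induction n with
  | zero =>
    refine ⟨fun x y z => rfl, fun x y z => ?_⟩
    simp only [FAux]; ring
  | succ n ih =>
    obtain ⟨hs, hH⟩ := ih
    constructor
    · intro x y z
      simp only [FAux]
      linear_combination (x+y) * hH x y z - y^2 * hs x y z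
    · intro x y z
      simp only [FAux]
      linear_combination ((x+z)*(x+y+1)) * hH (x+1) y z
        - ((y+z)*(x+y+1)) * hH (y+1) x z + (-(x:R)^2) * hH x y z
        + ((x+z)*(x+y+1)*(y+z)) * hs (y+1) (x+1) z

lemma FAux_swap12 {R : Type*} [CommRing R] (n : ℕ) (x y z : R) :
    FAux n x y z = FAux n y x z := (FAux_key n).1 x y z

lemma FAux_perm {R : Type*} [CommRing R] (n : ℕ) (x y z : R) :
    FAux n x y z = FAux n y x z ∧ FAux n x y z = FAux n x z y ∧
    FAux n x y z = FAux n z y x ∧ FAux n x y z = FAux n y z x ∧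
    FAux n x y z = FAux n z x y := by
  refine ⟨FAux_swap12 n x y z, FAux_swap23 n x y z, ?_, ?_, ?_⟩
  · rw [FAux_swap12, FAux_swap23, FAux_swap12]
  · rw [FAux_swap12, FAux_swap23]
  · rw [FAux_swap23, FAux_swap12]

theorem dumontFoata_symmetric {R : Type*} [CommRing R] (n : ℕ) (hn : 1 ≤ n)
    (σ : Equiv.Perm (Fin 3)) (v : Fin 3 → R) :
    DumontFoataF n (v (σ 0)) (v (σ 1)) (v (σ 2)) =
      DumontFoataF n (v 0) (v 1) (v 2) := by
  obtain ⟨h12, h23, h13, hc1, hc2⟩ := FAux_perm (n - 1) (v 0) (v 1) (v 2)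
  have hinj := σ.injective
  have e0 : σ 0 = 0 ∨ σ 0 = 1 ∨ σ 0 = 2 := by omega
  have e1 : σ 1 = 0 ∨ σ 1 = 1 ∨ σ 1 = 2 := by omega
  have e2 : σ 2 = 0 ∨ σ 2 = 1 ∨ σ 2 = 2 := by omega
  unfold DumontFoataF
  rcases e0 with h0 | h0 | h0 <;> rcases e1 with h1 | h1 | h1 <;>
    rcases e2 with h2 | h2 | h2 <;> rw [h0, h1, h2] <;>
    first
      | rfl
      | (exact (h12).symm) | (exact (h23).symm) | (exact (h13).symm)
      | (exact (hc1).symm) | (exact (hc2).symm)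
      | (exact absurd (hinj (h0.trans h1.symm)) (by decide))
      | (exact absurd (hinj (h0.trans h2.symm)) (by decide))
      | (exact absurd (hinj (h1.trans h2.symm)) (by decide))
end

section
/- Let Γ_n be defined by Γ_1 = 1 and the recurrence Γ_n = (x+z̄)(y+x̄)·Γ_{n-1}(x+1,y,z,x̄+1,ȳ,z̄) + (x(ȳ−y)+x̄(z−z̄)−x·x̄)·Γ_{n-1}, and let M be the ℕ×ℕ matrix M = ED + (z̄+x−x̄)D + (z+ȳ−y)E + (ȳ−y)(x−x̄)I with D(i,i)=y+i, D(i,i+1)=i+1, E(i,i)=x̄+i, E(i+1,i)=y+x̄+i. Then for all n ≥ 0, Γ_{n+1}(x,y,z,x̄,ȳ,z̄) = (M^n)(0,0). -/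
namespace DF
open MvPolynomial Finset

abbrev R6 : Type := MvPolynomial (Fin 6) ℤ

noncomputable def Mm : ℕ → ℕ → R6 := fun i j =>
  matMul (matE (X 1) (X 3)) (matD (X 1)) i j
    + ((X 5 : MvPolynomial (Fin 6) ℤ) + X 0 - X 3) * matD (X 1) i j
    + ((X 2 : MvPolynomial (Fin 6) ℤ) + X 4 - X 1) * matE (X 1) (X 3) i j
    + ((X 4 : MvPolynomial (Fin 6) ℤ) - X 1) * (X 0 - X 3)
      * (if i = j then 1 else 0)

lemma ED_zero (j : ℕ) :
    matMul (matE (X 1) (X 3) : ℕ → ℕ → R6) (matD (X 1)) 0 j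
      = matE (X 1) (X 3) 0 0 * matD (X 1) 0 j := by
  rw [show matMul (matE (X 1) (X 3) : ℕ → ℕ → R6) (matD (X 1)) 0 j
      = ∑ᶠ k, matE (X 1) (X 3) 0 k * matD (X 1) k j from rfl]
  apply finsum_eq_single (fun k => matE (X 1) (X 3) 0 k * matD (X 1) k j) 0
  intro k hk
  have h1 : matE (X 1) (X 3) (0:ℕ) k = (0 : R6) := by
    simp only [matE]
    rw [if_neg (by omega), if_neg (by omega)]
  rw [h1, zero_mul]

lemma ED_succ (i j : ℕ) :
    matMul (matE (X 1) (X 3) : ℕ → ℕ → R6) (matD (X 1)) (i+1) j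
      = matE (X 1) (X 3) (i+1) i * matD (X 1) i j
        + matE (X 1) (X 3) (i+1) (i+1) * matD (X 1) (i+1) j := by
  have hsub : (Function.support fun k => (matE (X 1) (X 3) (i+1) k * matD (X 1) k j : R6))
      ⊆ (({i, i+1} : Finset ℕ) : Set ℕ) := by
    intro k hk
    simp only [Function.mem_support] at hk
    by_contra hmem
    simp only [Finset.coe_insert, Set.mem_insert_iff, Finset.coe_singleton,
      Set.mem_singleton_iff] at hmem
    push_neg at hmem
    apply hk
    have h1 : matE (X 1) (X 3) (i+1) k = (0 : R6) := by
      simp only [matE]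
      rw [if_neg (by omega), if_neg (by omega)]
    rw [h1, zero_mul]
  rw [show matMul (matE (X 1) (X 3) : ℕ → ℕ → R6) (matD (X 1)) (i+1) j
      = ∑ᶠ k, matE (X 1) (X 3) (i+1) k * matD (X 1) k j from rfl]
  rw [finsum_eq_sum_of_support_subset _ hsub, Finset.sum_pair (by omega)]


noncomputable def Md (i : ℕ) : R6 :=
  (X 3 + (i : R6)) * (X 1 + (i : R6)) + (i : R6) * (X 1 + X 3 + (i : R6) - 1)
    + (X 5 + X 0 - X 3) * (X 1 + (i : R6)) + (X 2 + X 4 - X 1) * (X 3 + (i : R6))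
    + (X 4 - X 1) * (X 0 - X 3)

lemma Mm_sup (i : ℕ) : Mm i (i+1) = ((i : R6) + 1) * (X 0 + X 5 + (i : R6)) := by
  cases i with
  | zero =>
    show matMul (matE (X 1) (X 3)) (matD (X 1)) 0 1 + _ + _ + _ = _
    rw [ED_zero]
    simp only [matD, matE]
    split_ifs <;> first | (exfalso; first | exact ‹False› | omega) | (push_cast; ring)
  | succ i =>
    show matMul (matE (X 1) (X 3)) (matD (X 1)) (i+1) (i+2) + _ + _ + _ = _
    rw [ED_succ]
    simp only [matD, matE]
    split_ifs <;> first | (exfalso; first | exact ‹False› | omega) | (push_cast; ring)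

lemma Mm_sub (j : ℕ) : Mm (j+1) j = (X 1 + X 3 + (j : R6)) * (X 2 + X 4 + (j : R6)) := by
  show matMul (matE (X 1) (X 3)) (matD (X 1)) (j+1) j + _ + _ + _ = _
  rw [ED_succ]
  simp only [matD, matE]
  split_ifs <;> first | (exfalso; first | exact ‹False› | omega) | (push_cast; ring)

lemma Mm_diag (i : ℕ) : Mm i i = Md i := by
  cases i with
  | zero =>
    show matMul (matE (X 1) (X 3)) (matD (X 1)) 0 0 + _ + _ + _ = _
    rw [ED_zero]
    simp only [matD, matE, Md]
    split_ifs <;> first | (exfalso; first | exact ‹False› | omega) | (push_cast; ring)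
  | succ i =>
    show matMul (matE (X 1) (X 3)) (matD (X 1)) (i+1) (i+1) + _ + _ + _ = _
    rw [ED_succ]
    simp only [matD, matE, Md]
    split_ifs <;> first | (exfalso; first | exact ‹False› | omega) | (push_cast; ring)

lemma Mm_zero {i k : ℕ} (h : k ≥ i + 2 ∨ i ≥ k + 2) : Mm i k = 0 := by
  cases i with
  | zero =>
    show matMul (matE (X 1) (X 3)) (matD (X 1)) 0 k + _ + _ + _ = _
    rw [ED_zero]
    simp only [matD, matE]
    split_ifs <;> first | (exfalso; first | exact ‹False› | omega) | (push_cast; ring)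
  | succ i =>
    show matMul (matE (X 1) (X 3)) (matD (X 1)) (i+1) k + _ + _ + _ = _
    rw [ED_succ]
    simp only [matD, matE]
    split_ifs <;> first | (exfalso; first | exact ‹False› | omega) | (push_cast; ring)


lemma pow_succ_entry (n i : ℕ) :
    matPow Mm (n+1) i 0
      = (if i = 0 then 0 else Mm i (i-1) * matPow Mm n (i-1) 0)
        + Mm i i * matPow Mm n i 0 + Mm i (i+1) * matPow Mm n (i+1) 0 := by
  have hdef : matPow Mm (n+1) i 0 = ∑ᶠ k, Mm i k * matPow Mm n k 0 := rfl
  rw [hdef]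
  cases i with
  | zero =>
    have hsub : (Function.support fun k => (Mm 0 k * matPow Mm n k 0 : R6))
        ⊆ (({0, 1} : Finset ℕ) : Set ℕ) := by
      intro k hk
      simp only [Function.mem_support] at hk
      by_contra hmem
      simp only [Finset.coe_insert, Set.mem_insert_iff, Finset.coe_singleton,
        Set.mem_singleton_iff] at hmem
      push_neg at hmem
      exact hk (by rw [Mm_zero (by omega), zero_mul])
    rw [finsum_eq_sum_of_support_subset _ hsub, Finset.sum_pair (by omega)]
    simp
  | succ i =>
    have hsub : (Function.support fun k => (Mm (i+1) k * matPow Mm n k 0 : R6))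
        ⊆ (({i, i+1, i+2} : Finset ℕ) : Set ℕ) := by
      intro k hk
      simp only [Function.mem_support] at hk
      by_contra hmem
      simp only [Finset.coe_insert, Set.mem_insert_iff, Finset.coe_singleton,
        Set.mem_singleton_iff] at hmem
      push_neg at hmem
      exact hk (by rw [Mm_zero (by omega), zero_mul])
    rw [finsum_eq_sum_of_support_subset _ hsub]
    rw [Finset.sum_insert (by simp only [Finset.mem_insert, Finset.mem_singleton]; omega),
      Finset.sum_insert (by simp only [Finset.mem_singleton]; omega), Finset.sum_singleton]
    simp only [if_neg (Nat.succ_ne_zero i), Nat.add_sub_cancel]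
    ring

noncomputable def Gm (n m : ℕ) : R6 :=
  GammaAux n (X 0 + (m : R6)) (X 1) (X 2) (X 3 + (m : R6)) (X 4) (X 5)

noncomputable def Pp (i : ℕ) : R6 := ∏ k ∈ Finset.range i, (X 1 + X 3 + (k : R6))

noncomputable def cf (i m : ℕ) : R6 := (-1) ^ (i + m) * (i.choose m : R6)

noncomputable def Am (m : ℕ) : R6 := (X 0 + (m : R6) + X 5) * (X 1 + X 3 + (m : R6))

noncomputable def Bm (m : ℕ) : R6 :=
  (X 0 + (m : R6)) * (X 4 - X 1) + (X 3 + (m : R6)) * (X 2 - X 5)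
    - (X 0 + (m : R6)) * (X 3 + (m : R6))

noncomputable def Ssum (n i : ℕ) : R6 := ∑ m ∈ Finset.range (i+1), cf i m * Gm n m

noncomputable def tA (j : ℕ) : ℕ → R6
  | 0 => 0
  | l + 1 => cf (j+1) l * Am l

lemma Gm_succ (n m : ℕ) : Gm (n+1) m = Am m * Gm n (m+1) + Bm m * Gm n m := by
  have h0 : (X 0 + (m : R6)) + 1 = X 0 + ((m+1 : ℕ) : R6) := by push_cast; ring
  have h3 : (X 3 + (m : R6)) + 1 = X 3 + ((m+1 : ℕ) : R6) := by push_cast; ring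
  show GammaAux (n+1) _ _ _ _ _ _ = _
  rw [GammaAux, h0, h3]
  show _ = Am m * GammaAux n (X 0 + ((m+1 : ℕ) : R6)) _ _ (X 3 + ((m+1 : ℕ) : R6)) _ _
      + Bm m * GammaAux n (X 0 + (m : R6)) _ _ (X 3 + (m : R6)) _ _
  rw [Am, Bm]
  ring


lemma Pp_succ (i : ℕ) : Pp (i+1) = Pp i * (X 1 + X 3 + (i : R6)) :=
  Finset.prod_range_succ _ i

lemma coef (j m : ℕ) (hm : m ≤ j + 2) :
    Pp (j+1) * (tA j m + cf (j+1) m * Bm m)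
      = ((j : R6) + 1) * ((X 1 + X 3 + (j : R6)) * (X 2 + X 4 + (j : R6)))
          * Pp j * cf j m
        + Md (j+1) * Pp (j+1) * cf (j+1) m
        + (X 0 + X 5 + ((j : R6) + 1)) * Pp (j+2) * cf (j+2) m := by
  rcases m with _ | l
  · simp only [tA, cf, Nat.choose_zero_right, Nat.cast_one, mul_one, Nat.add_zero,
      Pp_succ, Md, Bm, zero_add]
    push_cast
    ring
  · have hl : l ≤ j + 1 := by omega
    have h1 : ((Nat.choose (j+2) (l+1) : ℕ) : R6)
        = ((Nat.choose (j+1) l : ℕ) : R6) + ((Nat.choose (j+1) (l+1) : ℕ) : R6) := by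
      rw [← Nat.cast_add, Nat.choose_succ_succ' (j+1) l]
    have h2 : ((Nat.choose (j+1) (l+1) : ℕ) : R6) * ((l : R6) + 1)
        = ((Nat.choose (j+1) l : ℕ) : R6) * ((j : R6) + 1 - (l : R6)) := by
      have hn := Nat.choose_succ_right_eq (j+1) l
      have hc := congrArg (fun t : ℕ => (t : R6)) hn
      push_cast [Nat.cast_sub (show l ≤ j + 1 by omega)] at hc
      linear_combination hc
    have h3 : ((j : R6) + 1) * ((Nat.choose j (l+1) : ℕ) : R6)
        = ((Nat.choose (j+1) (l+1) : ℕ) : R6) * ((j : R6) - (l : R6)) := by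
      by_cases hlj : l ≤ j
      · have hn := Nat.choose_mul_succ_eq j (l+1)
        have hc := congrArg (fun t : ℕ => (t : R6)) hn
        have hsub : j + 1 - (l + 1) = j - l := by omega
        rw [hsub] at hc
        push_cast [Nat.cast_sub hlj] at hc
        linear_combination hc
      · have hlj' : l = j + 1 := by omega
        subst hlj'
        rw [Nat.choose_eq_zero_of_lt (by omega), Nat.choose_eq_zero_of_lt (by omega)]
        push_cast
        ring
    simp only [tA, cf, Pp_succ, Md, Am, Bm]
    push_cast
    linear_combination
      ((-1 : R6))^(j+l) * Pp j * (X 1 + X 3 + (j : R6))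
          * ((X 0 + X 5 + (j : R6) + 1) * (X 1 + X 3 + (j : R6) + 1)) * h1
        - ((-1 : R6))^(j+l) * Pp j * (X 1 + X 3 + (j : R6))
          * (X 0 + X 5 + X 1 + X 3 + (l : R6) + (j : R6) + 1) * h2
        + ((-1 : R6))^(j+l) * Pp j * (X 1 + X 3 + (j : R6))
          * (X 2 + X 4 + (j : R6)) * h3


lemma sumid (n j : ℕ) :
    Pp (j+1) * Ssum (n+1) (j+1)
      = ((j : R6) + 1) * ((X 1 + X 3 + (j : R6)) * (X 2 + X 4 + (j : R6)))
          * (Pp j * Ssum n j)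
        + Md (j+1) * (Pp (j+1) * Ssum n (j+1))
        + (X 0 + X 5 + ((j : R6) + 1)) * (Pp (j+2) * Ssum n (j+2)) := by
  have e1 : Ssum (n+1) (j+1)
      = ∑ m ∈ Finset.range (j+3), (tA j m + cf (j+1) m * Bm m) * Gm n m := by
    rw [Ssum]
    calc ∑ m ∈ Finset.range (j+2), cf (j+1) m * Gm (n+1) m
        = ∑ m ∈ Finset.range (j+2),
            (cf (j+1) m * (Am m * Gm n (m+1)) + cf (j+1) m * Bm m * Gm n m) :=
          Finset.sum_congr rfl (fun m _ => by rw [Gm_succ]; ring)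
      _ = (∑ m ∈ Finset.range (j+2), cf (j+1) m * (Am m * Gm n (m+1)))
            + ∑ m ∈ Finset.range (j+2), cf (j+1) m * Bm m * Gm n m :=
          Finset.sum_add_distrib
      _ = (∑ m ∈ Finset.range (j+3), tA j m * Gm n m)
            + ∑ m ∈ Finset.range (j+3), cf (j+1) m * Bm m * Gm n m := by
          congr 1
          · rw [Finset.sum_range_succ' (fun m => tA j m * Gm n m) (j+2)]
            simp only [tA, zero_mul, add_zero]
            exact Finset.sum_congr rfl (fun m _ => by ring)
          · refine Finset.sum_subset (Finset.range_subset_range.mpr (by omega)) ?_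
            intro m hm hnm
            have hgt : j + 1 < m := by
              simp only [Finset.mem_range] at hm hnm; omega
            simp [cf, Nat.choose_eq_zero_of_lt hgt]
      _ = ∑ m ∈ Finset.range (j+3), (tA j m + cf (j+1) m * Bm m) * Gm n m := by
          rw [← Finset.sum_add_distrib]
          exact Finset.sum_congr rfl (fun m _ => by ring)
  have e2 : Ssum n j = ∑ m ∈ Finset.range (j+3), cf j m * Gm n m := by
    rw [Ssum]
    refine Finset.sum_subset (Finset.range_subset_range.mpr (by omega)) ?_
    intro m hm hnm
    have hgt : j < m := by simp only [Finset.mem_range] at hm hnm; omega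
    simp [cf, Nat.choose_eq_zero_of_lt hgt]
  have e3 : Ssum n (j+1) = ∑ m ∈ Finset.range (j+3), cf (j+1) m * Gm n m := by
    rw [Ssum]
    refine Finset.sum_subset (Finset.range_subset_range.mpr (by omega)) ?_
    intro m hm hnm
    have hgt : j + 1 < m := by simp only [Finset.mem_range] at hm hnm; omega
    simp [cf, Nat.choose_eq_zero_of_lt hgt]
  have e4 : Ssum n (j+2) = ∑ m ∈ Finset.range (j+3), cf (j+2) m * Gm n m := rfl
  rw [e1, e2, e3, e4]
  rw [Finset.mul_sum, Finset.mul_sum, Finset.mul_sum, Finset.mul_sum,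
    Finset.mul_sum, Finset.mul_sum, Finset.mul_sum]
  rw [← Finset.sum_add_distrib, ← Finset.sum_add_distrib]
  refine Finset.sum_congr rfl (fun m hm => ?_)
  have hm2 : m ≤ j + 2 := by simp only [Finset.mem_range] at hm; omega
  linear_combination Gm n m * coef j m hm2


lemma key (n : ℕ) : ∀ i, ((i.factorial : ℕ) : R6) * matPow Mm n i 0 = Pp i * Ssum n i := by
  induction n with
  | zero =>
    intro i
    cases i with
    | zero =>
      show ((1:ℕ) : R6) * (if (0:ℕ) = 0 then 1 else 0) = Pp 0 * Ssum 0 0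
      simp [Pp, Ssum, cf, Gm]
      rfl
    | succ i =>
      show (((i+1).factorial : ℕ) : R6) * (if i + 1 = 0 then 1 else 0) = Pp (i+1) * Ssum 0 (i+1)
      rw [if_neg (by omega), mul_zero]
      have hG : ∀ m, Gm 0 m = 1 := fun m => rfl
      have halt : (∑ m ∈ Finset.range (i+2), (-1:ℤ)^m * ((i+1).choose m : ℤ)) = 0 := by
        have h := Int.alternating_sum_range_choose (n := i+1)
        rw [if_neg (by omega)] at h
        exact h
      have hS : Ssum 0 (i+1) = 0 := by
        rw [Ssum]
        simp only [hG, mul_one, cf]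
        calc ∑ m ∈ Finset.range (i+2), (-1 : R6)^(i+1+m) * ((i+1).choose m : R6)
            = (-1)^(i+1) * ∑ m ∈ Finset.range (i+2), (-1 : R6)^m * ((i+1).choose m : R6) := by
              rw [Finset.mul_sum]
              exact Finset.sum_congr rfl (fun m _ => by rw [pow_add]; ring)
          _ = 0 := by
              have hcast : ((∑ m ∈ Finset.range (i+2), (-1:ℤ)^m * ((i+1).choose m : ℤ) : ℤ) : R6)
                  = ∑ m ∈ Finset.range (i+2), (-1 : R6)^m * ((i+1).choose m : R6) := by
                push_cast
                ring
              rw [← hcast, halt]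
              push_cast
              ring
      rw [hS, mul_zero]
  | succ n ih =>
    intro i
    cases i with
    | zero =>
      have h0 := ih 0
      have h1 := ih 1
      rw [pow_succ_entry, Mm_diag 0, Mm_sup 0]
      simp only [if_pos rfl, zero_add]
      simp only [Nat.factorial_zero, Nat.factorial_one, Nat.cast_one, one_mul] at h0 h1 ⊢
      have hRHS : Pp 0 * Ssum (n+1) 0 = Am 0 * Gm n 1 + Bm 0 * Gm n 0 := by
        rw [Pp, Finset.prod_range_zero, one_mul, Ssum, Finset.sum_range_one]
        rw [show Gm (n+1) 0 = Am 0 * Gm n (0+1) + Bm 0 * Gm n 0 from Gm_succ n 0]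
        simp [cf]
      rw [hRHS]
      have h0' : matPow Mm n 0 0 = Gm n 0 := by
        rw [h0, Pp, Finset.prod_range_zero, one_mul, Ssum, Finset.sum_range_one]
        simp [cf]
      have h1' : matPow Mm n 1 0
          = (X 1 + X 3 + ((0:ℕ) : R6)) * (cf 1 0 * Gm n 0 + cf 1 1 * Gm n 1) := by
        rw [h1, Pp_succ, Pp, Finset.prod_range_zero, one_mul, Ssum,
          Finset.sum_range_succ, Finset.sum_range_one]
      rw [h0', h1']
      simp only [Md, Am, Bm, cf, Nat.choose_self, Nat.choose_zero_right, Nat.cast_one]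
      push_cast
      ring
    | succ j =>
      have hj := ih j
      have hj1 := ih (j+1)
      have hj2 := ih (j+2)
      have hs := sumid n j
      rw [pow_succ_entry, if_neg (by omega)]
      simp only [Nat.add_sub_cancel]
      rw [Mm_sub j, Mm_diag (j+1), Mm_sup (j+1)]
      have hf1 : (((j+1).factorial : ℕ) : R6) = ((j : R6) + 1) * ((j.factorial : ℕ) : R6) := by
        rw [Nat.factorial_succ]
        push_cast
        ring
      have hf2 : (((j+2).factorial : ℕ) : R6)
          = ((j : R6) + 2) * (((j+1).factorial : ℕ) : R6) := by
        rw [show j + 2 = (j+1) + 1 from rfl, Nat.factorial_succ]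
        push_cast
        ring
      rw [hf1] at hj1 ⊢
      rw [hf2, hf1] at hj2
      push_cast at hj hj1 hj2 hs ⊢
      linear_combination ((j:R6)+1) * (X 1 + X 3 + (j:R6)) * (X 2 + X 4 + (j:R6)) * hj
        + Md (j+1) * hj1
        + (X 0 + X 5 + (j:R6) + 1) * hj2
        - hs

end DF

open MvPolynomial in
theorem gamma_eq_matM_pow_entry (n : ℕ) :
    Gamma (n + 1) (X 0 : MvPolynomial (Fin 6) ℤ) (X 1) (X 2) (X 3) (X 4) (X 5) =
      matPow
        (fun i j =>
          matMul (matE (X 1) (X 3)) (matD (X 1)) i j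
            + ((X 5 : MvPolynomial (Fin 6) ℤ) + X 0 - X 3) * matD (X 1) i j
            + ((X 2 : MvPolynomial (Fin 6) ℤ) + X 4 - X 1) * matE (X 1) (X 3) i j
            + ((X 4 : MvPolynomial (Fin 6) ℤ) - X 1) * (X 0 - X 3)
              * (if i = j then 1 else 0))
        n 0 0 := by
  have h := DF.key n 0
  simp only [Nat.factorial_zero, Nat.cast_one, one_mul, DF.Pp, Finset.prod_range_zero,
    zero_add, DF.Ssum, Finset.sum_range_one, DF.cf, DF.Gm, Nat.choose_self, pow_zero,
    Nat.cast_zero, add_zero, Nat.cast_one, mul_one, one_mul] at h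
  rw [show (fun i j =>
          matMul (matE (X 1) (X 3)) (matD (X 1)) i j
            + ((X 5 : MvPolynomial (Fin 6) ℤ) + X 0 - X 3) * matD (X 1) i j
            + ((X 2 : MvPolynomial (Fin 6) ℤ) + X 4 - X 1) * matE (X 1) (X 3) i j
            + ((X 4 : MvPolynomial (Fin 6) ℤ) - X 1) * (X 0 - X 3)
              * (if i = j then 1 else 0)) = DF.Mm from rfl]
  rw [show Gamma (n+1) = GammaAux (R := MvPolynomial (Fin 6) ℤ) n from by
    rw [Gamma, Nat.add_sub_cancel]]
  exact h.symm
end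

section
/- Let Γ_n be defined by Γ_1 = 1 and the generalized Dumont-Foata recurrence, and let N = A(B+xI)(B+x̄I) + y·z̄·(A+I) + (zI+z̄A)(B+x̄I) + (ȳI+yA)(B+xI), where B(i,i)=i, B(i,i+1)=i+1, A(i+1,i)=1 and all other entries are zero. Then for all n ≥ 0, Γ_{n+1}(x,y,z,x̄,ȳ,z̄) = (N^n)(0,0). -/
/-! Let `σ` shift `x ↦ x + 1`, `x̄ ↦ x̄ + 1` and let `Δ = σ - 1`. The recurrence reads
`Γ_{n+1} = Tⁿ 1` with `T p = (x + z̄)(y + x̄) σp + (x(ȳ - y) + x̄(z - z̄) - x x̄) p`, and the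
Leibniz rule for `Δ` gives the commutation relation
`Δʲ T = N(j-1, j) Δʲ⁻¹ + N(j, j) Δʲ + N(j+1, j) Δʲ⁺¹`.
Hence the row vector `(Δʲ Tⁿ 1)ⱼ` is multiplied on the right by `N` at each step; it starts as the
first unit row, so `Δʲ Tⁿ 1 = Nⁿ(0, j)`, and `j = 0` is the theorem. -/

open Function

section RowFinite

variable {R : Type*} [CommRing R]

def RowFinite (M : ℕ → ℕ → R) : Prop := ∀ i, (support (M i)).Finite

lemma RowFinite.matMul {M N : ℕ → ℕ → R} (hM : RowFinite M) (hN : RowFinite N) :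
    RowFinite (matMul M N) := by
  intro i
  refine ((hM i).biUnion fun k _ => hN k).subset fun j hj => ?_
  by_contra hout
  refine hj (finsum_eq_zero_of_forall_eq_zero fun k => ?_)
  by_contra hk
  exact hout (Set.mem_biUnion (left_ne_zero_of_mul hk) (right_ne_zero_of_mul hk))

lemma RowFinite.matPow {M : ℕ → ℕ → R} (hM : RowFinite M) : ∀ n, RowFinite (_root_.matPow M n)
  | 0 => fun i => (Set.finite_singleton i).subset fun j hj => by
      by_contra h
      exact hj (if_neg (Ne.symm h))
  | n + 1 => hM.matMul (hM.matPow n)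

lemma matMul_assoc {M N : ℕ → ℕ → R} (hM : RowFinite M) (hN : RowFinite N)
    (P : ℕ → ℕ → R) : matMul (matMul M N) P = matMul M (matMul N P) := by
  ext i j
  have hS : support (M i) ⊆ (hM i).toFinset := by rw [Set.Finite.coe_toFinset]
  have hsum (l : ℕ) : ∑ᶠ k, M i k * N k l = ∑ k ∈ (hM i).toFinset, M i k * N k l :=
    finsum_eq_sum_of_support_subset _ ((support_mul_subset_left _ _).trans hS)
  simp only [matMul, hsum, Finset.sum_mul]
  rw [finsum_eq_sum_of_support_subset _ ((support_mul_subset_left _ _).trans hS),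
    finsum_sum_comm _ _ fun k _ => (hN k).subset fun l hl =>
      right_ne_zero_of_mul (left_ne_zero_of_mul (hl : M i k * N k l * P l j ≠ 0))]
  refine Finset.sum_congr rfl fun k _ => ?_
  rw [mul_finsum' _ _ ((hN k).subset (support_mul_subset_left _ _))]
  simp only [mul_assoc]

lemma matMul_matI_left (M : ℕ → ℕ → R) : matMul matI M = M := by
  ext i j
  rw [matMul, finsum_eq_single _ i fun k hk => by simp [matI, Ne.symm hk]]
  simp [matI]

lemma matMul_matI_right (M : ℕ → ℕ → R) : matMul M matI = M := by
  ext i j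
  rw [matMul, finsum_eq_single _ j fun k hk => by simp [matI, hk]]
  simp [matI]

lemma matPow_succ' {M : ℕ → ℕ → R} (hM : RowFinite M) :
    ∀ n, matPow M (n + 1) = matMul (matPow M n) M
  | 0 => (matMul_matI_right M).trans (matMul_matI_left M).symm
  | n + 1 => by
      change matMul M (matPow M (n + 1)) = matMul (matMul M (matPow M n)) M
      rw [matPow_succ' hM n, matMul_assoc hM (hM.matPow n)]

end RowFinite

section Entries

variable {R : Type*} [CommRing R]

lemma matMul_apply_eq_sum (M N : ℕ → ℕ → R) {i j : ℕ} (s : Finset ℕ)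
    (hs : ∀ k ∉ s, M i k = 0 ∨ N k j = 0) : matMul M N i j = ∑ k ∈ s, M i k * N k j :=
  finsum_eq_sum_of_support_subset _ fun k hk => by
    by_contra h
    obtain h0 | h0 := hs k h <;> simp [h0] at hk

lemma matMul_matA_zero (M : ℕ → ℕ → R) (j : ℕ) : matMul matA M 0 j = 0 := by
  rw [matMul_apply_eq_sum _ _ ∅ fun k _ => .inl (if_neg (by omega)), Finset.sum_empty]

lemma matMul_matA_succ (M : ℕ → ℕ → R) (i j : ℕ) : matMul matA M (i + 1) j = M i j := by
  rw [matMul_apply_eq_sum _ _ {i} fun k hk => .inl (if_neg (by simp at hk; omega))]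
  simp [matA]

lemma matMul_smul_matI_add_smul_matA_zero (a b : R) (M : ℕ → ℕ → R) (j : ℕ) :
    matMul (fun k l => a * matI k l + b * matA k l) M 0 j = a * M 0 j := by
  rw [matMul_apply_eq_sum _ _ {0} fun k hk => .inl (by simp at hk; simp [matI, matA, Ne.symm hk])]
  simp [matI, matA]

lemma matMul_smul_matI_add_smul_matA_succ (a b : R) (M : ℕ → ℕ → R) (i j : ℕ) :
    matMul (fun k l => a * matI k l + b * matA k l) M (i + 1) j = b * M i j + a * M (i + 1) j := by
  rw [matMul_apply_eq_sum _ _ {i, i + 1} fun k hk => by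
    simp only [Finset.mem_insert, Finset.mem_singleton, not_or] at hk
    exact .inl (by simp [matI, matA, Ne.symm hk.1, Ne.symm hk.2])]
  simp [matI, matA]

lemma matB_add_smul_matI_apply (c : R) (i j : ℕ) :
    matB i j + c * matI i j = if j = i then i + c else if j = i + 1 then i + 1 else 0 := by
  by_cases h : j = i
  · simp [matB, matI, h]
  · simp [matB, matI, h, Ne.symm h]

lemma matMul_matB_add_smul_matI (c : R) (M : ℕ → ℕ → R) (i j : ℕ) :
    matMul (fun k l => matB k l + c * matI k l) M i j
      = (i + c) * M i j + (i + 1) * M (i + 1) j := by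
  rw [matMul_apply_eq_sum _ _ {i, i + 1} fun k hk => by
    simp only [Finset.mem_insert, Finset.mem_singleton, not_or] at hk
    exact .inl (by simp [matB_add_smul_matI_apply, hk.1, hk.2])]
  simp [matB_add_smul_matI_apply]

variable (x y z xb yb zb : R)

def nAbove (j : ℕ) : R := j * (z + yb + j - 1)

def nDiag (j : ℕ) : R :=
  x * yb + y * zb + z * xb + j * (x + y + z + xb + yb + zb) + j * (2 * j - 1)

def nBelow (j : ℕ) : R := (x + zb + j) * (y + xb + j)

lemma matN_apply (i j : ℕ) :
    matN x y z xb yb zb i j =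
      if i = j then nDiag x y z xb yb zb j
      else if i + 1 = j then nAbove z yb j
      else if i = j + 1 then nBelow x y xb zb j
      else 0 := by
  cases i with
  | zero =>
    simp only [matN, matMul_matA_zero, matMul_smul_matI_add_smul_matA_zero]
    simp only [matB, matA, matI, nDiag, nAbove, nBelow]
    split_ifs <;> subst_vars <;> first | contradiction | omega | (push_cast; ring)
  | succ m =>
    simp only [matN, matMul_matA_succ, matMul_smul_matI_add_smul_matA_succ,
      matMul_matB_add_smul_matI]
    simp only [matB, matA, matI, nDiag, nAbove, nBelow]
    split_ifs <;> subst_vars <;> first | contradiction | omega | (push_cast; ring)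

lemma rowFinite_matN : RowFinite (matN x y z xb yb zb) := fun i =>
  (Set.finite_Iio (i + 2)).subset fun j hj => by
    by_contra h
    simp only [Set.mem_Iio, not_lt] at h
    exact hj (by rw [matN_apply, if_neg (by omega), if_neg (by omega), if_neg (by omega)])

-- At `j = 0` the truncated `j - 1` is harmless, since `nAbove z yb 0 = 0`.
lemma matMul_matN_apply (M : ℕ → ℕ → R) (i j : ℕ) :
    matMul M (matN x y z xb yb zb) i j =
      nAbove z yb j * M i (j - 1) + nDiag x y z xb yb zb j * M i j
        + nBelow x y xb zb j * M i (j + 1) := by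
  cases j with
  | zero =>
    rw [matMul_apply_eq_sum _ _ {0, 1} fun k hk => .inr (by
      simp only [Finset.mem_insert, Finset.mem_singleton, not_or] at hk
      rw [matN_apply, if_neg (by omega), if_neg (by omega), if_neg (by omega)])]
    simp [matN_apply, nAbove]
    ring
  | succ m =>
    rw [matMul_apply_eq_sum _ _ {m, m + 1, m + 2} fun k hk => .inr (by
      simp only [Finset.mem_insert, Finset.mem_singleton, not_or] at hk
      rw [matN_apply, if_neg (by omega), if_neg (by omega), if_neg (by omega)])]
    simp [matN_apply]
    ring

end Entries

lemma map_gammaAux {R S F : Type*} [CommRing R] [CommRing S] [FunLike F R S] [RingHomClass F R S]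
    (f : F) (n : ℕ) (x y z xb yb zb : R) :
    f (GammaAux n x y z xb yb zb) = GammaAux n (f x) (f y) (f z) (f xb) (f yb) (f zb) := by
  induction n generalizing x xb with
  | zero => simp [GammaAux]
  | succ n ih => simp [GammaAux, ih]

namespace DumontFoata

open MvPolynomial

variable {R : Type*} [CommRing R]

-- `X 0, …, X 5` stand for `x, y, z, x̄, ȳ, z̄`.
noncomputable def shift : MvPolynomial (Fin 6) R →ₐ[R] MvPolynomial (Fin 6) R :=
  aeval ![X 0 + 1, X 1, X 2, X 3 + 1, X 4, X 5]

noncomputable def diff (p : MvPolynomial (Fin 6) R) : MvPolynomial (Fin 6) R := shift p - p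

noncomputable def step (p : MvPolynomial (Fin 6) R) : MvPolynomial (Fin 6) R :=
  (X 0 + X 5) * (X 1 + X 3) * shift p + (X 0 * (X 4 - X 1) + X 3 * (X 2 - X 5) - X 0 * X 3) * p

lemma diff_add (p q : MvPolynomial (Fin 6) R) : diff (p + q) = diff p + diff q := by
  simp only [diff, map_add]; ring

lemma diff_mul (p q : MvPolynomial (Fin 6) R) : diff (p * q) = shift p * diff q + diff p * q := by
  simp only [diff, map_mul]; ring

lemma iterate_diff_one (j : ℕ) :
    diff^[j] (1 : MvPolynomial (Fin 6) R) = if 0 = j then 1 else 0 := by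
  induction j with
  | zero => rfl
  | succ j ih =>
    rw [iterate_succ_apply', ih, if_neg (Nat.succ_ne_zero j).symm]
    split_ifs <;> simp [diff]

lemma gammaAux_eq_iterate_step (n : ℕ) :
    GammaAux n (X 0) (X 1) (X 2) (X 3) (X 4) (X 5) = step^[n] (1 : MvPolynomial (Fin 6) R) := by
  induction n with
  | zero => rfl
  | succ n ih =>
    have hshift : shift (GammaAux n (X 0) (X 1) (X 2) (X 3) (X 4) (X 5))
        = GammaAux n (X 0 + 1) (X 1) (X 2) (X 3 + 1) (X 4) (X 5 : MvPolynomial (Fin 6) R) := by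
      simp [map_gammaAux, shift]
    rw [iterate_succ_apply', ← ih, step, GammaAux, hshift]

lemma shift_nAbove (j : ℕ) :
    shift (nAbove (X 2) (X 4) j : MvPolynomial (Fin 6) R) = nAbove (X 2) (X 4) j := by
  simp [shift, nAbove]

lemma shift_nBelow (j : ℕ) :
    shift (nBelow (X 0) (X 1) (X 3) (X 5) j : MvPolynomial (Fin 6) R)
      = nBelow (X 0) (X 1) (X 3) (X 5) (j + 1) := by
  simp [shift, nBelow]; ring

lemma nAbove_add_diff_nDiag (j : ℕ) :
    nAbove (X 2) (X 4) j + diff (nDiag (X 0) (X 1) (X 2) (X 3) (X 4) (X 5) j)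
      = (nAbove (X 2) (X 4) (j + 1) : MvPolynomial (Fin 6) R) := by
  simp [diff, shift, nAbove, nDiag, map_ofNat]; ring

lemma shift_nDiag_add_diff_nBelow (j : ℕ) :
    shift (nDiag (X 0) (X 1) (X 2) (X 3) (X 4) (X 5) j)
        + diff (nBelow (X 0) (X 1) (X 3) (X 5) j)
      = (nDiag (X 0) (X 1) (X 2) (X 3) (X 4) (X 5) (j + 1) : MvPolynomial (Fin 6) R) := by
  simp [diff, shift, nBelow, nDiag, map_ofNat]; ring

lemma iterate_diff_step (p : MvPolynomial (Fin 6) R) (j : ℕ) :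
    diff^[j] (step p) =
      nAbove (X 2) (X 4) j * diff^[j - 1] p
        + nDiag (X 0) (X 1) (X 2) (X 3) (X 4) (X 5) j * diff^[j] p
        + nBelow (X 0) (X 1) (X 3) (X 5) j * diff^[j + 1] p := by
  induction j with
  | zero =>
    simp only [iterate_zero_apply, iterate_succ_apply', step, diff, nAbove,
      nDiag, nBelow, Nat.cast_zero]
    ring
  | succ j ih =>
    have hA : nAbove (X 2) (X 4) j * diff (diff^[j - 1] p)
        = (nAbove (X 2) (X 4) j : MvPolynomial (Fin 6) R) * diff^[j] p := by
      cases j with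
      | zero => simp [nAbove]
      | succ j => rw [Nat.add_sub_cancel, ← iterate_succ_apply' diff]
    have hA' : diff (nAbove (X 2) (X 4) j : MvPolynomial (Fin 6) R) = 0 := by
      rw [diff, shift_nAbove, sub_self]
    rw [iterate_succ_apply', ih, diff_add, diff_add, diff_mul, diff_mul, diff_mul,
      shift_nAbove, hA, hA', shift_nBelow, ← iterate_succ_apply' diff j,
      ← iterate_succ_apply' diff (j + 1), Nat.add_sub_cancel]
    linear_combination diff^[j] p * nAbove_add_diff_nDiag (R := R) j
      + diff^[j + 1] p * shift_nDiag_add_diff_nBelow (R := R) j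

lemma iterate_diff_iterate_step_one (n j : ℕ) :
    diff^[j] (step^[n] (1 : MvPolynomial (Fin 6) R)) =
      matPow (matN (X 0) (X 1) (X 2) (X 3) (X 4) (X 5)) n 0 j := by
  induction n generalizing j with
  | zero => exact iterate_diff_one j
  | succ n ih =>
    rw [iterate_succ_apply', iterate_diff_step, matPow_succ' (rowFinite_matN _ _ _ _ _ _),
      matMul_matN_apply, ih, ih, ih]

end DumontFoata

open MvPolynomial in
theorem gamma_eq_matN_pow_entry (n : ℕ) :
    Gamma (n + 1) (X 0 : MvPolynomial (Fin 6) ℤ) (X 1) (X 2) (X 3) (X 4) (X 5) =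
      matPow (matN (X 0 : MvPolynomial (Fin 6) ℤ) (X 1) (X 2) (X 3) (X 4) (X 5))
        n 0 0 := by
  rw [Gamma, Nat.add_sub_cancel, DumontFoata.gammaAux_eq_iterate_step]
  exact DumontFoata.iterate_diff_iterate_step_one n 0
end

section
/- Two ℕ×ℕ tridiagonal matrices M and N over a commutative ring having the same diagonal entries M(i,i) = N(i,i) and the same products of paired off-diagonal entries M(i,i+1)·M(i+1,i) = N(i,i+1)·N(i+1,i) for all i satisfy (M^n)(0,0) = (N^n)(0,0) for all n ≥ 0. -/
/-- Universal "Motzkin" polynomial depending only on diagonals `b` and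
off-diagonal products `lam`. -/
noncomputable def pAux {R : Type*} [CommRing R] (b lam : ℕ → R) : ℕ → ℕ → ℕ → R
  | 0 => fun i j => if i = j then 1 else 0
  | n + 1 => fun i j =>
      (if i ≤ j then lam (i - 1) else 1) *
        (if i = 0 then 0 else pAux b lam n (i - 1) j)
      + b i * pAux b lam n i j
      + (if i < j then 1 else lam i) * pAux b lam n (i + 1) j

/-- Product of off-diagonal entries along the path between `i` and `j`. -/
noncomputable def cEnt {R : Type*} [CommRing R] (M : ℕ → ℕ → R) (i j : ℕ) : R :=
  if i ≤ j then ∏ k ∈ Finset.Ico i j, M k (k + 1)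
  else ∏ k ∈ Finset.Ico j i, M (k + 1) k

lemma cEnt_of_le {R : Type*} [CommRing R] (M : ℕ → ℕ → R) {i j : ℕ} (h : i ≤ j) :
    cEnt M i j = ∏ k ∈ Finset.Ico i j, M k (k + 1) := if_pos h

lemma cEnt_of_ge {R : Type*} [CommRing R] (M : ℕ → ℕ → R) {i j : ℕ} (h : j ≤ i) :
    cEnt M i j = ∏ k ∈ Finset.Ico j i, M (k + 1) k := by
  rcases eq_or_lt_of_le h with rfl | h'
  · simp [cEnt]
  · exact if_neg (by omega)

lemma matMul_eq_sum {R : Type*} [CommRing R] (M P : ℕ → ℕ → R)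
    (hM : ∀ i j : ℕ, (i + 1 < j ∨ j + 1 < i) → M i j = 0) (i j : ℕ) :
    matMul M P i j = ∑ k ∈ Finset.Ico (i - 1) (i + 2), M i k * P k j := by
  rw [matMul]
  apply finsum_eq_finset_sum_of_support_subset
  intro k hk
  simp only [Function.mem_support, Finset.coe_Ico, Set.mem_Ico] at hk ⊢
  by_contra h
  push_neg at h
  have : M i k = 0 := hM i k (by omega)
  simp [this] at hk

lemma cEnt_self {R : Type*} [CommRing R] (M : ℕ → ℕ → R) (i : ℕ) : cEnt M i i = 1 := by
  simp [cEnt]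

lemma cEnt_left {R : Type*} [CommRing R] (M : ℕ → ℕ → R) (m j : ℕ) :
    M (m + 1) m * cEnt M m j =
      cEnt M (m + 1) j * (if m + 1 ≤ j then M m (m + 1) * M (m + 1) m else 1) := by
  by_cases h : m + 1 ≤ j
  · rw [if_pos h, cEnt_of_le M (by omega : m ≤ j), cEnt_of_le M h,
      Finset.prod_eq_prod_Ico_succ_bot (by omega : m < j)]
    ring
  · rw [if_neg h, cEnt_of_ge M (by omega : j ≤ m), cEnt_of_ge M (by omega : j ≤ m + 1),
      Finset.prod_Ico_succ_top (by omega : j ≤ m)]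
    ring

lemma cEnt_right {R : Type*} [CommRing R] (M : ℕ → ℕ → R) (i j : ℕ) :
    M i (i + 1) * cEnt M (i + 1) j =
      cEnt M i j * (if i < j then 1 else M i (i + 1) * M (i + 1) i) := by
  by_cases h : i < j
  · rw [if_pos h, cEnt_of_le M (by omega : i + 1 ≤ j), cEnt_of_le M (by omega : i ≤ j),
      Finset.prod_eq_prod_Ico_succ_bot h]
    ring
  · rw [if_neg h, cEnt_of_ge M (by omega : j ≤ i + 1), cEnt_of_ge M (by omega : j ≤ i),
      Finset.prod_Ico_succ_top (by omega : j ≤ i)]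
    ring

lemma matPow_eq_cEnt_mul_pAux {R : Type*} [CommRing R] (M : ℕ → ℕ → R)
    (hM : ∀ i j : ℕ, (i + 1 < j ∨ j + 1 < i) → M i j = 0) (n : ℕ) (i j : ℕ) :
    matPow M n i j =
      cEnt M i j * pAux (fun k => M k k) (fun k => M k (k + 1) * M (k + 1) k) n i j := by
  set b : ℕ → R := fun k => M k k with hb
  set lam : ℕ → R := fun k => M k (k + 1) * M (k + 1) k with hlam
  induction n generalizing i j with
  | zero =>
    simp only [matPow, pAux]
    by_cases h : i = j
    · subst h; simp [cEnt_self]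
    · simp [h]
  | succ n ih =>
    rw [matPow, matMul_eq_sum M _ hM]
    rcases Nat.eq_zero_or_pos i with rfl | hi
    · rw [show Finset.Ico (0 - 1) (0 + 2) = {0, 1} by decide]
      rw [Finset.sum_insert (by decide), Finset.sum_singleton]
      rw [ih 0 j, ih 1 j]
      have hp : pAux b lam (n + 1) 0 j =
          b 0 * pAux b lam n 0 j + (if 0 < j then 1 else lam 0) * pAux b lam n 1 j := by
        simp [pAux]
      rw [hp]
      have hr := cEnt_right M 0 j
      rw [show (0 : ℕ) + 1 = 1 from rfl] at hr
      have hlam0 : lam 0 = M 0 1 * M 1 0 := rfl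
      have hb0 : b 0 = M 0 0 := rfl
      rw [hlam0, hb0]
      linear_combination pAux b lam n 1 j * hr
    · obtain ⟨m, rfl⟩ : ∃ m, i = m + 1 := ⟨i - 1, by omega⟩
      rw [show m + 1 - 1 = m from rfl, show m + 1 + 2 = m + 3 from rfl]
      rw [show Finset.Ico m (m + 3) = {m, m + 1, m + 2} by
        ext k; simp only [Finset.mem_Ico, Finset.mem_insert, Finset.mem_singleton]; omega]
      rw [Finset.sum_insert (by simp), Finset.sum_insert (by simp), Finset.sum_singleton]
      rw [ih m j, ih (m + 1) j, ih (m + 2) j]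
      have hp : pAux b lam (n + 1) (m + 1) j =
          (if m + 1 ≤ j then lam m else 1) * pAux b lam n m j
          + b (m + 1) * pAux b lam n (m + 1) j
          + (if m + 1 < j then 1 else lam (m + 1)) * pAux b lam n (m + 2) j := by
        simp [pAux]
      rw [hp]
      have hl := cEnt_left M m j
      have hr := cEnt_right M (m + 1) j
      rw [show m + 1 + 1 = m + 2 from rfl] at hr
      have hlm : lam m = M m (m + 1) * M (m + 1) m := rfl
      have hlm1 : lam (m + 1) = M (m + 1) (m + 2) * M (m + 2) (m + 1) := rfl
      have hbm : b (m + 1) = M (m + 1) (m + 1) := rfl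
      rw [hlm, hlm1, hbm]
      linear_combination pAux b lam n m j * hl + pAux b lam n (m + 2) j * hr

theorem tridiagonal_moments_eq {R : Type*} [CommRing R] (M N : ℕ → ℕ → R)
    (hM : ∀ i j : ℕ, (i + 1 < j ∨ j + 1 < i) → M i j = 0)
    (hN : ∀ i j : ℕ, (i + 1 < j ∨ j + 1 < i) → N i j = 0)
    (hdiag : ∀ i : ℕ, M i i = N i i)
    (hprod : ∀ i : ℕ, M i (i + 1) * M (i + 1) i = N i (i + 1) * N (i + 1) i)
    (n : ℕ) :
    matPow M n 0 0 = matPow N n 0 0 := by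
  have hb : (fun k => M k k) = fun k => N k k := funext hdiag
  have hl : (fun k => M k (k + 1) * M (k + 1) k) = fun k => N k (k + 1) * N (k + 1) k :=
    funext hprod
  rw [matPow_eq_cEnt_mul_pAux M hM, matPow_eq_cEnt_mul_pAux N hN, cEnt_self, cEnt_self,
    hb, hl]
end
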